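/- If the residual after a least-squares step is nonzero and some dictionary column is not orthogonal to it, then the OMP selection rule argmax_l (QQᴴ)_{l,l} with Q = Ψ(C)ᴴ F_res picks a column l with Ψ_lᴴ F_res ≠ 0, and appending this column strictly decreases the minimal residual: r(T ∪ {l}) < r(T). -/

import Mathlib

open Matrix

noncomputable def frobNorm {m n : ℕ} (A : Matrix (Fin m) (Fin n) ℂ) : ℝ :=
  Real.sqrt (∑ i, ∑ j, ‖A i j‖ ^ 2)

/-- Minimal least-squares residual using the dictionary columns indexed by `T`. -/
noncomputable def lsResidual {M L S : ℕ} (Ψ : Matrix (Fin M) (Fin L) ℂ)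
    (F : Matrix (Fin M) (Fin S) ℂ) (T : Finset (Fin L)) : ℝ :=
  sInf {x : ℝ | ∃ G : Matrix (Fin L) (Fin S) ℂ,
    (∀ l : Fin L, l ∉ T → G l = 0) ∧ x = frobNorm (F - Ψ * G)}

lemma frob_eq_normSq {m n : ℕ} (A : Matrix (Fin m) (Fin n) ℂ) :
    frobNorm A = Real.sqrt (∑ i, ∑ j, Complex.normSq (A i j)) := by
  simp [frobNorm, Complex.sq_norm]

/-- If the least-squares residual `F_res` over the columns in `T` is such that some dictionary
column is not orthogonal to it, then the OMP argmax rule on `(QQᴴ)_{l,l}`, `Q = Ψᴴ F_res`,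
selects a column `l` with `Ψ_lᴴ F_res ≠ 0`, and appending it strictly decreases the minimal
residual: `r(T ∪ {l}) < r(T)`. -/
theorem omp_strict_decrease
    (M L S : ℕ) (Ψ : Matrix (Fin M) (Fin L) ℂ) (F : Matrix (Fin M) (Fin S) ℂ)
    (T : Finset (Fin L))
    (G₀ : Matrix (Fin L) (Fin S) ℂ) (hsupp : ∀ l : Fin L, l ∉ T → G₀ l = 0)
    (Fres : Matrix (Fin M) (Fin S) ℂ) (hFres : Fres = F - Ψ * G₀)
    (hmin : ∀ G : Matrix (Fin L) (Fin S) ℂ, (∀ l : Fin L, l ∉ T → G l = 0) →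
      frobNorm Fres ≤ frobNorm (F - Ψ * G))
    (Q : Matrix (Fin L) (Fin S) ℂ) (hQ : Q = Ψᴴ * Fres)
    (hex : ∃ l₀ : Fin L, (fun s => Q l₀ s) ≠ 0)
    (l : Fin L) (hargmax : ∀ l' : Fin L, ((Q * Qᴴ) l' l').re ≤ ((Q * Qᴴ) l l).re)
    (hrank : LinearIndependent ℂ
      (fun j : {j : Fin L // j ∈ insert l T} => fun m => Ψ m (j : Fin L))) :
    (fun s => Q l s) ≠ 0 ∧ lsResidual Ψ F (insert l T) < frobNorm Fres := by
  classical
  -- diagonal of Q Qᴴ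
  have hdiag : ∀ l' : Fin L, ((Q * Qᴴ) l' l').re = ∑ s, Complex.normSq (Q l' s) := by
    intro l'
    rw [Matrix.mul_apply, Complex.re_sum]
    refine Finset.sum_congr rfl fun s _ => ?_
    rw [Matrix.conjTranspose_apply, Complex.star_def, Complex.mul_conj, Complex.ofReal_re]
  obtain ⟨l₀, hl₀⟩ := hex
  have hl₀pos : 0 < ∑ s, Complex.normSq (Q l₀ s) := by
    have h1 : ∃ s, Q l₀ s ≠ 0 := by
      by_contra h; push_neg at h; exact hl₀ (funext h)
    obtain ⟨s₀, hs₀⟩ := h1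
    exact Finset.sum_pos' (fun s _ => Complex.normSq_nonneg _)
      ⟨s₀, Finset.mem_univ _, Complex.normSq_pos.mpr hs₀⟩
  have ha : 0 < ∑ s, Complex.normSq (Q l s) := by
    have := hargmax l₀
    rw [hdiag, hdiag] at this
    linarith
  have hQl : (fun s => Q l s) ≠ 0 := by
    intro h
    have h' : ∀ s, Q l s = 0 := fun s => congrFun h s
    simp [h'] at ha
  refine ⟨hQl, ?_⟩
  -- notation
  set a : ℝ := ∑ s, Complex.normSq (Q l s) with ha_def
  set c : ℝ := ∑ m, Complex.normSq (Ψ m l) with hc_def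
  set N : ℝ := ∑ m, ∑ s, Complex.normSq (Fres m s) with hN_def
  -- Q entries
  have hQentry : ∀ s, Q l s = ∑ m, (starRingEnd ℂ) (Ψ m l) * Fres m s := by
    intro s
    rw [hQ, Matrix.mul_apply]
    exact Finset.sum_congr rfl fun m _ => by rw [Matrix.conjTranspose_apply, Complex.star_def]
  have hc : 0 < c := by
    by_contra h
    push_neg at h
    have hz : ∀ m, Ψ m l = 0 := by
      intro m
      by_contra hm
      have : 0 < c := Finset.sum_pos' (fun s _ => Complex.normSq_nonneg _)
        ⟨m, Finset.mem_univ _, Complex.normSq_pos.mpr hm⟩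
      linarith
    have hq0 : ∀ s, Q l s = 0 := fun s => by rw [hQentry]; simp [hz]
    rw [ha_def] at ha
    simp [hq0] at ha
  set t : ℝ := 1 / c with ht_def
  -- the improved coefficient matrix
  set G : Matrix (Fin L) (Fin S) ℂ :=
    fun l' s => G₀ l' s + (t : ℂ) * (if l' = l then Q l s else 0) with hG_def
  have hGsupp : ∀ l' : Fin L, l' ∉ insert l T → G l' = 0 := by
    intro l' hl'
    rw [Finset.mem_insert] at hl'
    push_neg at hl'
    funext s
    have := congrFun (hsupp l' hl'.2) s
    simp [hG_def, hl'.1, this]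
  have hFG : ∀ m s, (F - Ψ * G) m s = Fres m s - (t : ℂ) * (Ψ m l * Q l s) := by
    intro m s
    have : (Ψ * G) m s = (Ψ * G₀) m s + (t : ℂ) * (Ψ m l * Q l s) := by
      rw [Matrix.mul_apply, Matrix.mul_apply]
      simp only [hG_def, mul_add, Finset.sum_add_distrib]
      congr 1
      rw [show (∑ x, Ψ m x * ((t:ℂ) * if x = l then Q l s else 0))
          = ∑ x, (if x = l then Ψ m x * ((t:ℂ) * Q l s) else 0) from
        Finset.sum_congr rfl fun x _ => by split <;> simp]
      rw [Finset.sum_ite_eq']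
      simp; ring
    simp only [Matrix.sub_apply, this, hFres]
    ring
  -- key cross term
  have hX : ∑ m, ∑ s, (Fres m s * (starRingEnd ℂ) ((t:ℂ) * (Ψ m l * Q l s))).re = t * a := by
    have hsum : ∑ m, ∑ s, Fres m s * (starRingEnd ℂ) ((t:ℂ) * (Ψ m l * Q l s))
        = (t : ℂ) * (a : ℂ) := by
      rw [Finset.sum_comm]
      have hs : ∀ s : Fin S, ∑ m, Fres m s * (starRingEnd ℂ) ((t:ℂ) * (Ψ m l * Q l s))
          = (t : ℂ) * ((starRingEnd ℂ) (Q l s) * Q l s) := by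
        intro s
        have : ∑ m, Fres m s * (starRingEnd ℂ) ((t:ℂ) * (Ψ m l * Q l s))
            = (t : ℂ) * ((starRingEnd ℂ) (Q l s) * ∑ m, (starRingEnd ℂ) (Ψ m l) * Fres m s) := by
          rw [Finset.mul_sum, Finset.mul_sum]
          refine Finset.sum_congr rfl fun m _ => ?_
          simp [_root_.map_mul, Complex.conj_ofReal]
          ring
        rw [this, ← hQentry]
      rw [Finset.sum_congr rfl fun s _ => hs s, ← Finset.mul_sum]
      congr 1
      rw [show (a : ℂ) = ∑ s, (Complex.normSq (Q l s) : ℂ) by push_cast [ha_def]; ring]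
      exact Finset.sum_congr rfl fun s _ => by
        rw [mul_comm, Complex.mul_conj]
    have := congrArg Complex.re hsum
    rw [Complex.re_sum] at this
    rw [show ∑ m, ∑ s, (Fres m s * (starRingEnd ℂ) ((t:ℂ) * (Ψ m l * Q l s))).re
        = ∑ m, (∑ s, Fres m s * (starRingEnd ℂ) ((t:ℂ) * (Ψ m l * Q l s))).re from
      Finset.sum_congr rfl fun m _ => (Complex.re_sum _ _).symm]
    rw [this]
    simp
  -- squared norms sum
  have hsq : ∑ m, ∑ s, Complex.normSq ((F - Ψ * G) m s) = N - a / c := by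
    have hterm : ∀ m s, Complex.normSq ((F - Ψ * G) m s)
        = Complex.normSq (Fres m s) + t^2 * (Complex.normSq (Ψ m l) * Complex.normSq (Q l s))
          - 2 * (Fres m s * (starRingEnd ℂ) ((t:ℂ) * (Ψ m l * Q l s))).re := by
      intro m s
      rw [hFG, Complex.normSq_sub, Complex.normSq_mul, Complex.normSq_mul,
        Complex.normSq_ofReal]
      ring
    calc ∑ m, ∑ s, Complex.normSq ((F - Ψ * G) m s)
        = (∑ m, ∑ s, Complex.normSq (Fres m s))
          + t^2 * ∑ m, ∑ s, (Complex.normSq (Ψ m l) * Complex.normSq (Q l s))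
          - 2 * ∑ m, ∑ s, (Fres m s * (starRingEnd ℂ) ((t:ℂ) * (Ψ m l * Q l s))).re := by
          rw [Finset.sum_congr rfl fun m _ => Finset.sum_congr rfl fun s _ => hterm m s]
          rw [Finset.mul_sum, Finset.mul_sum]
          rw [← Finset.sum_add_distrib, ← Finset.sum_sub_distrib]
          refine Finset.sum_congr rfl fun m _ => ?_
          rw [Finset.mul_sum, Finset.mul_sum, ← Finset.sum_add_distrib, ← Finset.sum_sub_distrib]
      _ = N + t^2 * (c * a) - 2 * (t * a) := by
          rw [hX]
          congr 2
          rw [hc_def, ha_def, Finset.sum_mul_sum]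
      _ = N - a / c := by
          rw [ht_def]
          field_simp
          ring
  have hsq_nonneg : 0 ≤ N - a / c := by
    rw [← hsq]
    exact Finset.sum_nonneg fun m _ => Finset.sum_nonneg fun s _ => Complex.normSq_nonneg _
  have hlt : N - a / c < N := by
    have : 0 < a / c := div_pos ha hc
    linarith
  -- conclude via csInf
  have hmem : frobNorm (F - Ψ * G) ∈ {x : ℝ | ∃ G' : Matrix (Fin L) (Fin S) ℂ,
      (∀ l' : Fin L, l' ∉ insert l T → G' l' = 0) ∧ x = frobNorm (F - Ψ * G')} :=
    ⟨G, hGsupp, rfl⟩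
  have hbdd : BddBelow {x : ℝ | ∃ G' : Matrix (Fin L) (Fin S) ℂ,
      (∀ l' : Fin L, l' ∉ insert l T → G' l' = 0) ∧ x = frobNorm (F - Ψ * G')} := by
    refine ⟨0, fun x hx => ?_⟩
    obtain ⟨G', _, hx⟩ := hx
    rw [hx, frobNorm]
    exact Real.sqrt_nonneg _
  have h1 : lsResidual Ψ F (insert l T) ≤ frobNorm (F - Ψ * G) := csInf_le hbdd hmem
  have h2 : frobNorm (F - Ψ * G) < frobNorm Fres := by
    rw [frob_eq_normSq, frob_eq_normSq, hsq, ← hN_def]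
    exact Real.sqrt_lt_sqrt hsq_nonneg hlt
  exact lt_of_le_of_lt h1 h2
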